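/- The angle function θ is strictly increasing on [0,∞): for all 0 ≤ z₁ < z₂ one has θ(z₁) < θ(z₂). -/

import Mathlib

/-!
Put `t = √z`. The point `γ(t) = t / Γ(3/4 - t²) - i / Γ(1/4 - t²)` traces a smooth curve in `ℂ`,
and the reflection formula turns its winding rate `Im (γ'/γ)` into a positive multiple of
`2πz + cos(2πz)/2 · (1 - 2z (ψ(z + 3/4) - ψ(z + 1/4)))`, which is positive because
`0 ≤ ψ(x + 1/2) - ψ(x) ≤ 1/x` by log-convexity of `Γ`. So `γ` never vanishes and its continuous
argument `-π/2 + Im ∫₀ᵗ γ'/γ` is strictly increasing. Both this argument at `√z` and `θ(z)` are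
continuous lifts of the argument of the same point, agreeing at `z = 0`, hence they coincide.
-/

open Real Set

lemma eq_mul_cexp_integral_div {γ γ' : ℝ → ℂ} (hγ : ∀ t, HasDerivAt γ (γ' t) t)
    (hγ' : Continuous γ') (hne : ∀ t, γ t ≠ 0) (a t : ℝ) :
    γ t = γ a * Complex.exp (∫ u in a..t, γ' u / γ u) := by
  have hcont : Continuous fun u => γ' u / γ u :=
    hγ'.div (continuous_iff_continuousAt.mpr fun t => (hγ t).continuousAt) hne
  have hL : ∀ t, HasDerivAt (fun t => ∫ u in a..t, γ' u / γ u) (γ' t / γ t) t := fun t =>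
    (hcont.integral_hasStrictDerivAt a t).hasDerivAt
  have hconst :
      ∀ t, HasDerivAt (fun t => γ t * Complex.exp (-∫ u in a..t, γ' u / γ u)) 0 t := by
    intro t
    refine ((hγ t).mul (hL t).neg.cexp).congr_deriv ?_
    field_simp [hne t]
    ring
  have h := is_const_of_deriv_eq_zero (fun t => (hconst t).differentiableAt)
    (fun t => (hconst t).deriv) t a
  simp only [intervalIntegral.integral_same, neg_zero, Complex.exp_zero, mul_one] at h
  rw [← h, mul_assoc, ← Complex.exp_add, neg_add_cancel, Complex.exp_zero, mul_one]

lemma exists_pos_mul_cexp_add_integral_im {γ γ' : ℝ → ℂ} (hγ : ∀ t, HasDerivAt γ (γ' t) t)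
    (hγ' : Continuous γ') (hne : ∀ t, γ t ≠ 0) {a r₀ θ₀ : ℝ} (hr₀ : 0 < r₀)
    (ha : γ a = r₀ * Complex.exp (θ₀ * Complex.I)) (t : ℝ) :
    ∃ r > (0 : ℝ),
      γ t = r * Complex.exp ((θ₀ + (∫ u in a..t, γ' u / γ u).im : ℝ) * Complex.I) := by
  rw [eq_mul_cexp_integral_div hγ hγ' hne a t, ha]
  set L := ∫ u in a..t, γ' u / γ u
  refine ⟨r₀ * Real.exp L.re, by positivity, ?_⟩
  conv_lhs => rw [← Complex.re_add_im L]
  push_cast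
  simp only [add_mul, Complex.exp_add]
  ring

lemma cexp_mul_I_eq_of_ofReal_mul_eq {r s θ φ : ℝ} (hr : 0 < r) (hs : 0 < s)
    (h : (r : ℂ) * Complex.exp (θ * Complex.I) = s * Complex.exp (φ * Complex.I)) :
    Complex.exp (θ * Complex.I) = Complex.exp (φ * Complex.I) := by
  have hrs : r = s := by
    simpa [Complex.norm_exp_ofReal_mul_I, abs_of_pos hr, abs_of_pos hs] using congrArg norm h
  rw [hrs] at h
  exact mul_left_cancel₀ (Complex.ofReal_ne_zero.mpr hs.ne') h

theorem IsPreconnected.eqOn_of_cexp_mul_I_eq {α : Type*} [TopologicalSpace α] {S : Set α}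
    (hS : IsPreconnected S) {f g : α → ℝ} (hf : ContinuousOn f S) (hg : ContinuousOn g S)
    {a : α} (ha : a ∈ S) (hfg : f a = g a)
    (h : ∀ x ∈ S, Complex.exp (f x * Complex.I) = Complex.exp (g x * Complex.I)) :
    EqOn f g S := by
  have hmaps : MapsTo (f - g) S (AddSubgroup.zmultiples (2 * π)) := by
    intro x hx
    obtain ⟨n, hn⟩ := Complex.exp_eq_exp_iff_exists_int.mp (h x hx)
    refine AddSubgroup.mem_zmultiples_iff.mpr ⟨n, ?_⟩
    have hI : ((f x - g x : ℝ) : ℂ) * Complex.I = ((n * (2 * π) : ℝ) : ℂ) * Complex.I := by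
      push_cast
      linear_combination hn
    rw [zsmul_eq_mul, Pi.sub_apply]
    exact_mod_cast (mul_right_cancel₀ Complex.I_ne_zero hI).symm
  intro x hx
  have := hS.constant_of_mapsTo (isDiscrete_iff_discreteTopology.mpr
    (inferInstance : DiscreteTopology (AddSubgroup.zmultiples (2 * π))))
    (hf.sub hg) hmaps hx ha
  simp only [Pi.sub_apply, hfg, sub_self] at this
  linarith

lemma hasDerivAt_integral_im {g : ℝ → ℂ} (hg : Continuous g) (a t : ℝ) :
    HasDerivAt (fun t => (∫ u in a..t, g u).im) (g t).im t :=
  Complex.imCLM.hasFDerivAt.comp_hasDerivAt t (hg.integral_hasStrictDerivAt a t).hasDerivAt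

namespace Real

lemma hasDerivAt_inv_Gamma (x : ℝ) :
    HasDerivAt (fun s : ℝ => (Gamma s)⁻¹) (deriv (fun s : ℂ => (Complex.Gamma s)⁻¹) x).re x := by
  have h := (Complex.differentiable_one_div_Gamma (x : ℂ)).hasDerivAt.real_of_complex
  simpa only [← Complex.ofReal_inv, Complex.Gamma_ofReal, Complex.ofReal_re] using h

lemma differentiable_inv_Gamma : Differentiable ℝ fun s : ℝ => (Gamma s)⁻¹ :=
  fun x => (hasDerivAt_inv_Gamma x).differentiableAt

lemma continuous_deriv_inv_Gamma : Continuous (deriv fun s : ℝ => (Gamma s)⁻¹) := by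
  rw [funext fun x => (hasDerivAt_inv_Gamma x).deriv]
  have := Complex.differentiable_one_div_Gamma.contDiff.continuous_deriv le_rfl
  fun_prop

lemma inv_Gamma_eq_Gamma_one_sub_mul_sin {s : ℝ} (hs : Gamma (1 - s) ≠ 0) :
    (Gamma s)⁻¹ = Gamma (1 - s) * sin (π * s) / π := by
  have hrefl := Gamma_mul_Gamma_one_sub s
  by_cases hΓ : Gamma s = 0
  · obtain ⟨m, rfl⟩ := (Gamma_eq_zero_iff s).mp hΓ
    rw [hΓ, inv_zero, mul_neg, sin_neg, mul_comm π, sin_nat_mul_pi]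
    simp
  · have hsin : sin (π * s) ≠ 0 := by
      intro h
      rw [h, div_zero] at hrefl
      exact mul_ne_zero hΓ hs hrefl
    field_simp
    rw [hrefl]
    field_simp

lemma hasDerivAt_log_Gamma {x : ℝ} (hx : 0 < x) :
    HasDerivAt (log ∘ Gamma) (logDeriv Gamma x) x :=
  (differentiableAt_Gamma fun m => by linarith [m.cast_nonneg (α := ℝ)]).hasDerivAt.log
    (Gamma_pos_of_pos hx).ne'

lemma monotoneOn_logDeriv_Gamma : MonotoneOn (logDeriv Gamma) (Ioi 0) := by
  have h := convexOn_log_Gamma.monotoneOn_deriv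
    fun x hx => (hasDerivAt_log_Gamma hx).differentiableAt
  intro a ha b hb hab
  rw [← (hasDerivAt_log_Gamma ha).deriv, ← (hasDerivAt_log_Gamma hb).deriv]
  exact h ha hb hab

lemma logDeriv_Gamma_add_one {x : ℝ} (hx : 0 < x) :
    logDeriv Gamma (x + 1) = logDeriv Gamma x + 1 / x := by
  have hshift : HasDerivAt (fun y => log (Gamma (y + 1))) (logDeriv Gamma (x + 1)) x := by
    simpa using (hasDerivAt_log_Gamma (by linarith : 0 < x + 1)).comp_add_const x 1
  have hprod : HasDerivAt (fun y => log y + log (Gamma y)) (1 / x + logDeriv Gamma x) x := by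
    rw [one_div]
    exact (hasDerivAt_log hx.ne').add (hasDerivAt_log_Gamma hx)
  have heq : (fun y => log (Gamma (y + 1))) =ᶠ[nhds x] fun y => log y + log (Gamma y) := by
    filter_upwards [Ioi_mem_nhds hx] with y hy
    rw [Gamma_add_one hy.ne', log_mul hy.ne' (Gamma_pos_of_pos hy).ne']
  rw [(hshift.congr_of_eventuallyEq heq.symm).unique hprod, add_comm]

lemma logDeriv_Gamma_add_half_sub_mem_Icc {x : ℝ} (hx : 0 < x) :
    logDeriv Gamma (x + 1 / 2) - logDeriv Gamma x ∈ Icc 0 (1 / x) := by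
  have hlow := monotoneOn_logDeriv_Gamma (mem_Ioi.mpr hx)
    (mem_Ioi.mpr (by linarith : 0 < x + 1 / 2)) (by linarith)
  have hup := monotoneOn_logDeriv_Gamma (mem_Ioi.mpr (by linarith : 0 < x + 1 / 2))
    (mem_Ioi.mpr (by linarith : 0 < x + 1)) (by linarith)
  rw [logDeriv_Gamma_add_one hx] at hup
  constructor <;> linarith

lemma deriv_inv_Gamma_of_lt_one {s : ℝ} (hs : s < 1) :
    deriv (fun s => (Gamma s)⁻¹) s =
      Gamma (1 - s) * (π * cos (π * s) - logDeriv Gamma (1 - s) * sin (π * s)) / π := by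
  have hΓ : 0 < Gamma (1 - s) := Gamma_pos_of_pos (by linarith)
  have hrefl : (fun s => (Gamma s)⁻¹) =ᶠ[nhds s] fun s => Gamma (1 - s) * sin (π * s) / π := by
    filter_upwards [Iio_mem_nhds hs] with y hy
    exact inv_Gamma_eq_Gamma_one_sub_mul_sin
      (Gamma_pos_of_pos (by linarith [mem_Iio.mp hy])).ne'
  have hΓd : DifferentiableAt ℝ Gamma (1 - s) :=
    differentiableAt_Gamma fun m => by linarith [m.cast_nonneg (α := ℝ)]
  have hderiv := ((hΓd.hasDerivAt.comp_const_sub 1 s).fun_mul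
    ((hasDerivAt_id' s).const_mul π).sin).div_const π
  rw [hrefl.deriv_eq, hderiv.deriv, logDeriv_apply]
  field_simp
  ring

end Real

lemma two_pi_mul_add_cos_mul_pos {z D : ℝ} (hz : 0 ≤ z) (hD : 0 ≤ D)
    (hDz : D * (z + 1 / 4) ≤ 1) :
    0 < 2 * π * z + cos (2 * π * z) / 2 * (1 - 2 * z * D) := by
  have hzD : 0 ≤ z * D := mul_nonneg hz hD
  rcases hz.eq_or_lt with rfl | hz
  · norm_num
  rcases le_or_gt z (1 / 4) with hsmall | hlarge
  · have hcos : 0 ≤ cos (2 * π * z) :=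
      cos_nonneg_of_mem_Icc ⟨by nlinarith [pi_pos], by nlinarith [pi_pos]⟩
    have : 0 ≤ 1 - 2 * z * D := by nlinarith
    nlinarith [pi_pos, mul_nonneg hcos this]
  · nlinarith [pi_gt_three, neg_one_le_cos (2 * π * z), cos_le_one (2 * π * z)]

/-- The point `(√z / Γ(3/4 - z), -1 / Γ(1/4 - z))` parametrised by `t = √z`, which makes it
smooth at `z = 0`. -/
noncomputable def angleCurve (t : ℝ) : ℂ :=
  ((t * (Gamma (3 / 4 - t ^ 2))⁻¹ : ℝ) : ℂ) - ((Gamma (1 / 4 - t ^ 2))⁻¹ : ℝ) * Complex.I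

noncomputable def angleCurve' (t : ℝ) : ℂ :=
  (((Gamma (3 / 4 - t ^ 2))⁻¹ - 2 * t ^ 2 * deriv (fun s => (Gamma s)⁻¹) (3 / 4 - t ^ 2) : ℝ)
      : ℂ) +
    ((2 * t * deriv (fun s => (Gamma s)⁻¹) (1 / 4 - t ^ 2) : ℝ) : ℂ) * Complex.I

@[simp] lemma angleCurve_re (t : ℝ) : (angleCurve t).re = t * (Gamma (3 / 4 - t ^ 2))⁻¹ := by
  simp [angleCurve]

@[simp] lemma angleCurve_im (t : ℝ) : (angleCurve t).im = -(Gamma (1 / 4 - t ^ 2))⁻¹ := by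
  simp [angleCurve]

lemma hasDerivAt_angleCurve (t : ℝ) : HasDerivAt angleCurve (angleCurve' t) t := by
  have hsq : ∀ c : ℝ, HasDerivAt (fun t : ℝ => c - t ^ 2) (-(2 * t)) t := fun c => by
    simpa using (hasDerivAt_pow 2 t).const_sub c
  have hR : ∀ c : ℝ, HasDerivAt (fun t : ℝ => (Gamma (c - t ^ 2))⁻¹)
      (deriv (fun s => (Gamma s)⁻¹) (c - t ^ 2) * -(2 * t)) t := fun c =>
    (Real.differentiable_inv_Gamma _).hasDerivAt.comp t (hsq c)
  refine ((((hasDerivAt_id' t).fun_mul (hR (3 / 4))).ofReal_comp).fun_sub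
    ((hR (1 / 4)).ofReal_comp.mul_const Complex.I)).congr_deriv ?_
  rw [angleCurve']
  push_cast
  ring

lemma continuous_angleCurve' : Continuous angleCurve' := by
  have hR : ∀ c : ℝ, Continuous fun t : ℝ => (Gamma (c - t ^ 2))⁻¹ := fun c =>
    Real.differentiable_inv_Gamma.continuous.comp (by fun_prop)
  have hR' : ∀ c : ℝ, Continuous fun t : ℝ => deriv (fun s => (Gamma s)⁻¹) (c - t ^ 2) :=
    fun c => Real.continuous_deriv_inv_Gamma.comp (by fun_prop)
  have := hR (3 / 4)
  have := hR' (3 / 4)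
  have := hR' (1 / 4)
  unfold angleCurve'
  fun_prop

lemma pi_sq_mul_angleCurve_cross (t : ℝ) :
    π ^ 2 * ((angleCurve' t).im * (angleCurve t).re - (angleCurve' t).re * (angleCurve t).im) =
      Gamma (t ^ 2 + 1 / 4) * Gamma (t ^ 2 + 3 / 4) * (2 * π * t ^ 2 + cos (2 * π * t ^ 2) / 2 *
        (1 - 2 * t ^ 2 * (logDeriv Gamma (t ^ 2 + 3 / 4) - logDeriv Gamma (t ^ 2 + 1 / 4)))) := by
  set z := t ^ 2 with hz
  set A := Gamma (z + 1 / 4)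
  set B := Gamma (z + 3 / 4)
  have hA : 0 < A := Gamma_pos_of_pos (by positivity)
  have hB : 0 < B := Gamma_pos_of_pos (by positivity)
  set p := logDeriv Gamma (z + 1 / 4)
  set q := logDeriv Gamma (z + 3 / 4)
  set S := sin (π * (1 / 4 - z))
  set C := cos (π * (1 / 4 - z))
  have hshift : π * (3 / 4 - z) = π * (1 / 4 - z) + π / 2 := by ring
  have hsin : sin (π * (3 / 4 - z)) = C := by rw [hshift, sin_add_pi_div_two]
  have hcos : cos (π * (3 / 4 - z)) = -S := by rw [hshift, cos_add_pi_div_two]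
  have ha : 1 - (3 / 4 - z) = z + 1 / 4 := by ring
  have hb : 1 - (1 / 4 - z) = z + 3 / 4 := by ring
  have hRa : (Gamma (3 / 4 - z))⁻¹ = A * C / π := by
    rw [inv_Gamma_eq_Gamma_one_sub_mul_sin (by rw [ha]; exact hA.ne'), ha, hsin]
  have hRb : (Gamma (1 / 4 - z))⁻¹ = B * S / π := by
    rw [inv_Gamma_eq_Gamma_one_sub_mul_sin (by rw [hb]; exact hB.ne'), hb]
  have hR'a : deriv (fun s => (Gamma s)⁻¹) (3 / 4 - z) = A * (π * -S - p * C) / π := by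
    rw [Real.deriv_inv_Gamma_of_lt_one (by linarith [sq_nonneg t]), ha, hsin, hcos]
  have hR'b : deriv (fun s => (Gamma s)⁻¹) (1 / 4 - z) = B * (π * C - q * S) / π := by
    rw [Real.deriv_inv_Gamma_of_lt_one (by linarith [sq_nonneg t]), hb]
  have hSC : S * C = cos (2 * π * z) / 2 := by
    have h := sin_two_mul (π * (1 / 4 - z))
    rw [show 2 * (π * (1 / 4 - z)) = π / 2 - 2 * π * z by ring, sin_pi_div_two_sub] at h
    linarith
  simp only [angleCurve, angleCurve', ← hz, Complex.add_re, Complex.add_im, Complex.sub_re,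
    Complex.sub_im, Complex.mul_re, Complex.mul_im, Complex.ofReal_re, Complex.ofReal_im,
    Complex.I_re, Complex.I_im, hRa, hRb, hR'a, hR'b]
  rw [← hSC]
  field_simp
  linear_combination (2 * π * z * A * B) * sin_sq_add_cos_sq (π * (1 / 4 - z))

lemma angleCurve_cross_pos (t : ℝ) :
    0 < (angleCurve' t).im * (angleCurve t).re - (angleCurve' t).re * (angleCurve t).im := by
  have hz : 0 < t ^ 2 + 1 / 4 := by positivity
  obtain ⟨hD0, hD1⟩ := logDeriv_Gamma_add_half_sub_mem_Icc hz
  rw [show t ^ 2 + 1 / 4 + 1 / 2 = t ^ 2 + 3 / 4 by ring] at hD0 hD1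
  have hDz : (logDeriv Gamma (t ^ 2 + 3 / 4) - logDeriv Gamma (t ^ 2 + 1 / 4)) * (t ^ 2 + 1 / 4)
      ≤ 1 := by
    calc _ ≤ 1 / (t ^ 2 + 1 / 4) * (t ^ 2 + 1 / 4) := by gcongr
      _ = 1 := by field_simp
  have hΓ : 0 < Gamma (t ^ 2 + 1 / 4) * Gamma (t ^ 2 + 3 / 4) :=
    mul_pos (Gamma_pos_of_pos hz) (Gamma_pos_of_pos (by positivity))
  refine pos_of_mul_pos_right ?_ (sq_nonneg π)
  rw [pi_sq_mul_angleCurve_cross]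
  exact mul_pos hΓ (two_pi_mul_add_cos_mul_pos (sq_nonneg t) hD0 hDz)

lemma continuous_angleCurve : Continuous angleCurve :=
  continuous_iff_continuousAt.mpr fun t => (hasDerivAt_angleCurve t).continuousAt

lemma angleCurve_ne_zero (t : ℝ) : angleCurve t ≠ 0 := by
  intro h
  simpa [h] using angleCurve_cross_pos t

lemma im_angleCurve'_div_angleCurve_pos (t : ℝ) : 0 < (angleCurve' t / angleCurve t).im := by
  rw [Complex.div_im, ← sub_div]
  exact div_pos (angleCurve_cross_pos t) (Complex.normSq_pos.mpr (angleCurve_ne_zero t))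

lemma angleCurve_zero :
    angleCurve 0 = ((Gamma (1 / 4))⁻¹ : ℝ) * Complex.exp ((-(π / 2) : ℝ) * Complex.I) := by
  apply Complex.ext <;>
    simp only [angleCurve_re, angleCurve_im, Complex.re_ofReal_mul, Complex.im_ofReal_mul,
      Complex.exp_ofReal_mul_I_re, Complex.exp_ofReal_mul_I_im, cos_neg, sin_neg, cos_pi_div_two,
      sin_pi_div_two] <;> norm_num

lemma angleCurve_sqrt_eq {z r φ : ℝ} (hz : 0 ≤ z)
    (hcos : r * cos φ = √z * (Gamma (3 / 4 - z))⁻¹) (hsin : r * sin φ = -(Gamma (1 / 4 - z))⁻¹) :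
    angleCurve √z = r * Complex.exp (φ * Complex.I) := by
  apply Complex.ext <;>
    simp [sq_sqrt hz, Complex.exp_ofReal_mul_I_re, Complex.exp_ofReal_mul_I_im, hcos, hsin]

theorem stmt9
    (θ : ℝ → ℝ)
    (hθc : ContinuousOn θ (Ici 0)) (hθ0 : θ 0 = -(π/2))
    (hθ : ∀ z ≥ (0:ℝ), ∃ r > (0:ℝ),
      r * Real.cos (θ z) = Real.sqrt z * (Real.Gamma (3/4 - z))⁻¹ ∧
      r * Real.sin (θ z) = -(Real.Gamma (1/4 - z))⁻¹) :
    ∀ z₁ z₂ : ℝ, 0 ≤ z₁ → z₁ < z₂ → θ z₁ < θ z₂ := by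
  set F : ℝ → ℝ :=
    fun t => -(π / 2) + (∫ u in (0 : ℝ)..t, angleCurve' u / angleCurve u).im
  have hF : ∀ t, HasDerivAt F (angleCurve' t / angleCurve t).im t := fun t =>
    (hasDerivAt_integral_im (continuous_angleCurve'.div continuous_angleCurve angleCurve_ne_zero)
      0 t).const_add _
  have hpolar : ∀ t, ∃ r > (0 : ℝ), angleCurve t = r * Complex.exp (F t * Complex.I) :=
    exists_pos_mul_cexp_add_integral_im hasDerivAt_angleCurve continuous_angleCurve'
      angleCurve_ne_zero (inv_pos.mpr (Gamma_pos_of_pos (by norm_num))) angleCurve_zero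
  have hθF : EqOn θ (F ∘ sqrt) (Ici 0) := by
    refine isPreconnected_Ici.eqOn_of_cexp_mul_I_eq hθc ?_ self_mem_Ici (by simp [F, hθ0]) ?_
    · exact (continuous_iff_continuousAt.mpr fun t => (hF t).continuousAt).comp_continuousOn
        continuous_sqrt.continuousOn
    · intro z hz
      obtain ⟨r, hr, hcos, hsin⟩ := hθ z hz
      obtain ⟨ρ, hρ, hγ⟩ := hpolar √z
      exact cexp_mul_I_eq_of_ofReal_mul_eq hr hρ
        ((angleCurve_sqrt_eq hz hcos hsin).symm.trans hγ)
  intro z₁ z₂ hz₁ hlt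
  rw [hθF (mem_Ici.mpr hz₁), hθF (mem_Ici.mpr (hz₁.trans hlt.le))]
  exact strictMono_of_hasDerivAt_pos hF im_angleCurve'_div_angleCurve_pos (sqrt_lt_sqrt hz₁ hlt)
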